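/- Let P be a Markov kernel on a countable state space Ξ with invariant probability π satisfying the geometric mixing bound ‖Pⁿ π₀ − π‖₁ ≤ c_ρ ρⁿ for all initial distributions π₀ (with c_ρ > 0, ρ ∈ [0,1)). Let Π denote the rank-one operator mapping any function f to its π-average (constant function). Then the operator I − P + Π acting on bounded functions f: Ξ → ℝ is invertible, with inverse given by the absolutely convergent Neumann series Σ_{k≥0} (P − Π)^k, and the inverse has operator norm (with respect to the supremum norm) at most 1 + c_ρ/(1−ρ). -/

import Mathlib

set_option maxHeartbeats 1000000

open BoundedContinuousFunction

/-- One step of the evolution of a distribution `q` under the kernel `p`: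
`(q P)(ξ') = Σ_ξ q(ξ) p(ξ, ξ')`. -/
noncomputable def stepDist {Ξ : Type*} (p : Ξ → Ξ → ℝ) (q : Ξ → ℝ) : Ξ → ℝ :=
  fun ξ' => ∑' ξ, q ξ * p ξ ξ'

section aux

variable {Ξ : Type*}

lemma aux_summable_wf {w f : Ξ → ℝ} (hw : Summable fun i => |w i|)
    {C : ℝ} (hf : ∀ i, |f i| ≤ C) : Summable fun i => w i * f i := by
  refine Summable.of_abs (Summable.of_nonneg_of_le (fun i => abs_nonneg _) (fun i => ?_)
    (hw.mul_right C))
  rw [abs_mul]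
  exact mul_le_mul_of_nonneg_left (hf i) (abs_nonneg _)

lemma aux_abs_tsum_le {w f : Ξ → ℝ} (hw : Summable fun i => |w i|)
    {C : ℝ} (hf : ∀ i, |f i| ≤ C) :
    |∑' i, w i * f i| ≤ (∑' i, |w i|) * C := by
  have habs : Summable fun i => |w i * f i| := by
    refine Summable.of_nonneg_of_le (fun i => abs_nonneg _) (fun i => ?_) (hw.mul_right C)
    rw [abs_mul]
    exact mul_le_mul_of_nonneg_left (hf i) (abs_nonneg _)
  calc |∑' i, w i * f i| ≤ ∑' i, |w i * f i| := by
        simpa only [Real.norm_eq_abs] using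
          norm_tsum_le_tsum_norm (f := fun i => w i * f i)
            (by simpa only [Real.norm_eq_abs] using habs)
    _ ≤ ∑' i, |w i| * C := by
        refine Summable.tsum_le_tsum (fun i => ?_) habs (hw.mul_right C)
        rw [abs_mul]
        exact mul_le_mul_of_nonneg_left (hf i) (abs_nonneg _)
    _ = (∑' i, |w i|) * C := tsum_mul_right

variable {p : Ξ → Ξ → ℝ} {q : Ξ → ℝ}

lemma aux_prod_summable (hq0 : ∀ i, 0 ≤ q i) (hq : Summable q)
    (hp0 : ∀ i j, 0 ≤ p i j) (hp1 : ∀ i, HasSum (p i) 1) :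
    Summable fun z : Ξ × Ξ => q z.1 * p z.1 z.2 := by
  rw [summable_prod_of_nonneg (fun z => mul_nonneg (hq0 _) (hp0 _ _))]
  refine ⟨fun a => (hp1 a).summable.mul_left (q a), ?_⟩
  have h : ∀ a, ∑' b, q a * p a b = q a := fun a => by
    rw [tsum_mul_left, (hp1 a).tsum_eq, mul_one]
  simpa [h] using hq

lemma aux_F_summable (hq0 : ∀ i, 0 ≤ q i) (hq : Summable q)
    (hp0 : ∀ i j, 0 ≤ p i j) (hp1 : ∀ i, HasSum (p i) 1)
    {f : Ξ → ℝ} {C : ℝ} (hf : ∀ i, |f i| ≤ C) :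
    Summable fun z : Ξ × Ξ => q z.1 * p z.1 z.2 * f z.2 := by
  have hG := aux_prod_summable hq0 hq hp0 hp1
  refine Summable.of_abs (Summable.of_nonneg_of_le (fun z => abs_nonneg _)
    (fun z => ?_) (hG.mul_right C))
  rw [abs_mul, abs_of_nonneg (mul_nonneg (hq0 _) (hp0 _ _))]
  exact mul_le_mul_of_nonneg_left (hf _) (mul_nonneg (hq0 _) (hp0 _ _))

lemma aux_pairing (hq0 : ∀ i, 0 ≤ q i) (hq : Summable q)
    (hp0 : ∀ i j, 0 ≤ p i j) (hp1 : ∀ i, HasSum (p i) 1)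
    {f : Ξ → ℝ} {C : ℝ} (hf : ∀ i, |f i| ≤ C) :
    ∑' ξ', stepDist p q ξ' * f ξ' = ∑' ξ, q ξ * ∑' ξ', p ξ ξ' * f ξ' := by
  set F : Ξ × Ξ → ℝ := fun z => q z.1 * p z.1 z.2 * f z.2 with hF
  have hFs : Summable F := aux_F_summable hq0 hq hp0 hp1 hf
  have hFrow : ∀ a, Summable fun b => F (a, b) := by
    intro a
    have : Summable fun b => p a b * f b := aux_summable_wf (by
      simpa [abs_of_nonneg (hp0 a _)] using (hp1 a).summable) hf
    simpa [hF, mul_assoc] using this.mul_left (q a)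
  have hH : Summable fun z : Ξ × Ξ => F z.swap := hFs.prod_symm
  have hHrow : ∀ b, Summable fun a => F (a, b) := by
    intro b
    have hinj : Function.Injective (fun a : Ξ => (a, b)) := fun a a' h => (Prod.ext_iff.1 h).1
    exact hFs.comp_injective hinj
  have hswap : ∑' z : Ξ × Ξ, F z.swap = ∑' z : Ξ × Ξ, F z := by
    refine Equiv.tsum_eq (Equiv.prodComm Ξ Ξ) _
  have h1 : ∑' z : Ξ × Ξ, F z = ∑' ξ, ∑' ξ', F (ξ, ξ') := Summable.tsum_prod' hFs hFrow
  have h2 : ∑' z : Ξ × Ξ, F z.swap = ∑' ξ', ∑' ξ, F (ξ, ξ') := Summable.tsum_prod' hH (fun b => hHrow b)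
  calc ∑' ξ', stepDist p q ξ' * f ξ'
      = ∑' ξ', ∑' ξ, F (ξ, ξ') := by
        refine tsum_congr fun ξ' => ?_
        rw [stepDist, ← tsum_mul_right]
    _ = ∑' z : Ξ × Ξ, F z.swap := h2.symm
    _ = ∑' z : Ξ × Ξ, F z := hswap
    _ = ∑' ξ, ∑' ξ', F (ξ, ξ') := h1
    _ = ∑' ξ, q ξ * ∑' ξ', p ξ ξ' * f ξ' := by
        refine tsum_congr fun ξ => ?_
        rw [← tsum_mul_left]
        exact tsum_congr fun ξ' => (mul_assoc _ _ _)

lemma aux_stepDist_prob (hq0 : ∀ i, 0 ≤ q i) (hq : HasSum q 1)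
    (hp0 : ∀ i j, 0 ≤ p i j) (hp1 : ∀ i, HasSum (p i) 1) :
    (∀ ξ', 0 ≤ stepDist p q ξ') ∧ HasSum (stepDist p q) 1 := by
  have hG := aux_prod_summable hq0 hq.summable hp0 hp1
  constructor
  · intro ξ'
    exact tsum_nonneg fun ξ => mul_nonneg (hq0 ξ) (hp0 ξ ξ')
  · have hH : Summable fun z : Ξ × Ξ => q z.2 * p z.2 z.1 := by
      have := hG.prod_symm
      simpa using this
    have hmarg : Summable (stepDist p q) := by
      have := ((summable_prod_of_nonneg (f := fun z : Ξ × Ξ => q z.2 * p z.2 z.1)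
        (fun z => mul_nonneg (hq0 _) (hp0 _ _))).1 hH).2
      exact this
    have htsum : ∑' ξ', stepDist p q ξ' = 1 := by
      have h := aux_pairing (f := fun _ => (1 : ℝ)) (C := 1) hq0 hq.summable hp0 hp1
        (fun i => by norm_num)
      simp only [mul_one] at h
      rw [← tsum_congr (fun ξ' => (mul_one (stepDist p q ξ')))] at *
      rw [h]
      have : ∀ ξ, ∑' ξ', p ξ ξ' = (1 : ℝ) := fun ξ => (hp1 ξ).tsum_eq
      simp only [this, mul_one]
      exact hq.tsum_eq
    exact htsum ▸ hmarg.hasSum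

end aux

lemma aux_ring {R : Type*} [Ring R] (a b : R) (h1 : a * b = b) (h2 : b * a = b)
    (h3 : b * b = b) : ∀ n : ℕ, (a - b) ^ (n + 1) = a ^ (n + 1) - b := by
  have hk : ∀ k : ℕ, a ^ k * b = b := by
    intro k
    induction k with
    | zero => simp
    | succ n ih => rw [pow_succ, mul_assoc, h1, ih]
  intro n
  induction n with
  | zero => simp
  | succ n ih =>
    rw [pow_succ, ih, sub_mul, mul_sub, mul_sub, hk, h2, h3, ← pow_succ]
    abel

lemma aux_clm_pow {E : Type*} [NormedAddCommGroup E] [NormedSpace ℝ E]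
    (A B : E →L[ℝ] E) (h1 : A * B = B) (h2 : B * A = B) (h3 : B * B = B) (n : ℕ) :
    (A - B) ^ (n + 1) = A ^ (n + 1) - B :=
  aux_ring A B h1 h2 h3 n

lemma aux_clm_sub_add {E : Type*} [NormedAddCommGroup E] [NormedSpace ℝ E]
    (A B : E →L[ℝ] E) : (1 : E →L[ℝ] E) - A + B = 1 - (A - B) :=
  sub_add 1 A B

lemma aux_clm_main {E : Type*} [NormedAddCommGroup E] [NormedSpace ℝ E] [CompleteSpace E]
    (T : E →L[ℝ] E) (c ρ : ℝ) (hc : 0 ≤ c) (hρ0 : 0 ≤ ρ) (hρ1 : ρ < 1)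
    (hb : ∀ k : ℕ, ‖T ^ (k + 1)‖ ≤ c * ρ ^ (k + 1)) :
    Summable (fun k : ℕ => T ^ k) ∧
      (∑' k : ℕ, T ^ k) * (1 - T) = 1 ∧
      (1 - T) * (∑' k : ℕ, T ^ k) = 1 ∧
      ‖∑' k : ℕ, T ^ k‖ ≤ 1 + c / (1 - ρ) := by
  have hnsum : Summable fun k : ℕ => ‖T ^ k‖ := by
    rw [← summable_nat_add_iff 1]
    refine Summable.of_nonneg_of_le (fun n => norm_nonneg _) (fun n => hb n) ?_
    refine ((summable_geometric_of_lt_one hρ0 hρ1).mul_left (c * ρ)).congr fun n => ?_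
    ring
  have hS : Summable fun k : ℕ => T ^ k := Summable.of_norm hnsum
  have hshift : Summable fun k : ℕ => T ^ (k + 1) := (summable_nat_add_iff 1).2 hS
  have hzero : ∑' k : ℕ, T ^ k = 1 + ∑' k : ℕ, T ^ (k + 1) := by
    simpa using Summable.tsum_eq_zero_add hS
  refine ⟨hS, ?_, ?_, ?_⟩
  · rw [← Summable.tsum_mul_right _ hS]
    have hterm : ∀ k : ℕ, T ^ k * (1 - T) = T ^ k - T ^ (k + 1) := fun k => by
      rw [mul_sub, mul_one, ← pow_succ]
    rw [tsum_congr hterm, Summable.tsum_sub hS hshift, hzero]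
    abel
  · rw [← Summable.tsum_mul_left _ hS]
    have hterm : ∀ k : ℕ, (1 - T) * T ^ k = T ^ k - T ^ (k + 1) := fun k => by
      rw [sub_mul, one_mul, ← pow_succ']
    rw [tsum_congr hterm, Summable.tsum_sub hS hshift, hzero]
    abel
  · have h3 : ‖T ^ 0‖ ≤ 1 := by
      rw [pow_zero, ContinuousLinearMap.one_def]
      exact ContinuousLinearMap.norm_id_le
    have h4 : ∑' k : ℕ, ‖T ^ (k + 1)‖ ≤ ∑' k : ℕ, c * ρ ^ k := by
      refine Summable.tsum_le_tsum (fun k => ?_) ((summable_nat_add_iff 1).2 hnsum)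
        ((summable_geometric_of_lt_one hρ0 hρ1).mul_left c)
      refine le_trans (hb k) ?_
      exact mul_le_mul_of_nonneg_left
        (pow_le_pow_of_le_one hρ0 hρ1.le (Nat.le_succ k)) hc
    have h5 : ∑' k : ℕ, c * ρ ^ k = c / (1 - ρ) := by
      rw [tsum_mul_left, tsum_geometric_of_lt_one hρ0 hρ1, div_eq_mul_inv]
    calc ‖∑' k : ℕ, T ^ k‖ ≤ ∑' k : ℕ, ‖T ^ k‖ := norm_tsum_le_tsum_norm hnsum
      _ = ‖T ^ 0‖ + ∑' k : ℕ, ‖T ^ (k + 1)‖ := Summable.tsum_eq_zero_add hnsum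
      _ ≤ 1 + c / (1 - ρ) := by rw [← h5]; exact add_le_add h3 h4

/-- Neumann-series inverse of `I − P + Π` for a geometrically mixing Markov kernel `P`
on a countable state space `Ξ` with stationary distribution `π`, where `Π` maps a bounded
function to the constant function equal to its `π`-average.  The series `Σ_k (P − Π)^k`
converges, inverts `I − P + Π` on both sides, and has operator norm at most
`1 + c_ρ/(1−ρ)`. -/
theorem neumann_inverse_of_mixing {Ξ : Type*} [Countable Ξ]
    [TopologicalSpace Ξ] [DiscreteTopology Ξ]
    (p : Ξ → Ξ → ℝ) (π : Ξ → ℝ)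
    (hp0 : ∀ ξ ξ', 0 ≤ p ξ ξ') (hp1 : ∀ ξ, HasSum (p ξ) 1)
    (hπ0 : ∀ ξ, 0 ≤ π ξ) (hπ1 : HasSum π 1)
    (hstat : ∀ ξ', HasSum (fun ξ => π ξ * p ξ ξ') (π ξ'))
    (cρ ρ : ℝ) (hc : 0 < cρ) (hρ0 : 0 ≤ ρ) (hρ1 : ρ < 1)
    (hmix : ∀ q : Ξ → ℝ, (∀ ξ, 0 ≤ q ξ) → HasSum q 1 → ∀ n : ℕ,
      ∑' ξ', |(stepDist p)^[n] q ξ' - π ξ'| ≤ cρ * ρ ^ n)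
    (P Pr : (Ξ →ᵇ ℝ) →L[ℝ] (Ξ →ᵇ ℝ))
    (hP : ∀ (f : Ξ →ᵇ ℝ) (ξ : Ξ), P f ξ = ∑' ξ', p ξ ξ' * f ξ')
    (hPr : ∀ (f : Ξ →ᵇ ℝ) (ξ : Ξ), Pr f ξ = ∑' ξ', π ξ' * f ξ') :
    Summable (fun k : ℕ => (P - Pr) ^ k) ∧
      (∑' k : ℕ, (P - Pr) ^ k) * (1 - P + Pr) = 1 ∧
      (1 - P + Pr) * (∑' k : ℕ, (P - Pr) ^ k) = 1 ∧
      ‖∑' k : ℕ, (P - Pr) ^ k‖ ≤ 1 + cρ / (1 - ρ) := by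
  classical
  have hfb : ∀ (f : Ξ →ᵇ ℝ) (ξ : Ξ), |f ξ| ≤ ‖f‖ := fun f ξ => by
    simpa [Real.norm_eq_abs] using f.norm_coe_le_norm ξ
  -- operator identities
  have hPPr : P * Pr = Pr := by
    ext f ξ
    rw [ContinuousLinearMap.mul_apply, hP, hPr]
    have h : ∀ ξ', (Pr f) ξ' = ∑' ξ'', π ξ'' * f ξ'' := fun ξ' => hPr f ξ'
    calc ∑' ξ', p ξ ξ' * (Pr f) ξ'
        = ∑' ξ', p ξ ξ' * ∑' ξ'', π ξ'' * f ξ'' := tsum_congr fun ξ' => by rw [h]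
      _ = (∑' ξ', p ξ ξ') * ∑' ξ'', π ξ'' * f ξ'' := tsum_mul_right
      _ = ∑' ξ'', π ξ'' * f ξ'' := by rw [(hp1 ξ).tsum_eq, one_mul]
  have hPrPr : Pr * Pr = Pr := by
    ext f ξ
    rw [ContinuousLinearMap.mul_apply, hPr, hPr]
    calc ∑' ξ', π ξ' * (Pr f) ξ'
        = ∑' ξ', π ξ' * ∑' ξ'', π ξ'' * f ξ'' := tsum_congr fun ξ' => by rw [hPr]
      _ = (∑' ξ', π ξ') * ∑' ξ'', π ξ'' * f ξ'' := tsum_mul_right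
      _ = ∑' ξ'', π ξ'' * f ξ'' := by rw [hπ1.tsum_eq, one_mul]
  have hstepπ : stepDist p π = π := by
    funext ξ'
    exact (hstat ξ').tsum_eq
  have hPrP : Pr * P = Pr := by
    ext f ξ
    rw [ContinuousLinearMap.mul_apply, hPr, hPr]
    have key := aux_pairing (q := π) (p := p) hπ0 hπ1.summable hp0 hp1 (f := (f : Ξ → ℝ))
      (C := ‖f‖) (hfb f)
    rw [hstepπ] at key
    calc ∑' ξ', π ξ' * (P f) ξ'
        = ∑' ξ, π ξ * ∑' ξ', p ξ ξ' * f ξ' := tsum_congr fun ξ' => by rw [hP]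
      _ = ∑' ξ', π ξ' * f ξ' := key.symm
  have hpow : ∀ k : ℕ, (P - Pr) ^ (k + 1) = P ^ (k + 1) - Pr := fun k =>
    aux_clm_pow P Pr hPPr hPrP hPrPr k
  -- Dirac deltas and their evolution
  set δ : Ξ → Ξ → ℝ := fun ξ ξ' => if ξ' = ξ then (1 : ℝ) else 0 with hδ
  have hδ0 : ∀ ξ ξ', 0 ≤ δ ξ ξ' := fun ξ ξ' => by
    by_cases h : ξ' = ξ <;> simp [hδ, h]
  have hδ1 : ∀ ξ, HasSum (δ ξ) 1 := fun ξ => hasSum_ite_eq ξ 1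
  have hq : ∀ (k : ℕ) (ξ : Ξ), (∀ ξ', 0 ≤ (stepDist p)^[k] (δ ξ) ξ') ∧
      HasSum ((stepDist p)^[k] (δ ξ)) 1 := by
    intro k ξ
    induction k with
    | zero => exact ⟨hδ0 ξ, hδ1 ξ⟩
    | succ n ih =>
      rw [Function.iterate_succ_apply']
      exact aux_stepDist_prob ih.1 ih.2 hp0 hp1
  have hdual : ∀ (k : ℕ) (f : Ξ →ᵇ ℝ) (ξ : Ξ),
      (P ^ k) f ξ = ∑' ξ', (stepDist p)^[k] (δ ξ) ξ' * f ξ' := by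
    intro k
    induction k with
    | zero =>
      intro f ξ
      simp only [pow_zero, ContinuousLinearMap.one_apply, Function.iterate_zero, id_eq]
      rw [tsum_eq_single ξ (fun b' hb' => by simp [hδ, hb'])]
      simp [hδ]
    | succ n ih =>
      intro f ξ
      have h1 : (P ^ (n + 1)) f ξ = (P ^ n) (P f) ξ := by
        rw [pow_succ, ContinuousLinearMap.mul_apply]
      rw [h1, ih (P f) ξ]
      have hpair := aux_pairing (q := (stepDist p)^[n] (δ ξ)) (p := p)
        (hq n ξ).1 (hq n ξ).2.summable hp0 hp1 (f := fun ξ => f ξ) (C := ‖f‖) (hfb f)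
      rw [Function.iterate_succ_apply', hpair]
      exact tsum_congr fun ξ' => by rw [hP]
  -- norm bound on (P - Pr)^(k+1)
  have hbound : ∀ k : ℕ, ‖(P - Pr) ^ (k + 1)‖ ≤ cρ * ρ ^ (k + 1) := by
    intro k
    refine ContinuousLinearMap.opNorm_le_bound _
      (by positivity) fun f => ?_
    rw [hpow k]
    rw [ContinuousLinearMap.sub_apply]
    refine (BoundedContinuousFunction.norm_le (by positivity)).2 fun ξ => ?_
    set w : Ξ → ℝ := fun ξ' => (stepDist p)^[k + 1] (δ ξ) ξ' - π ξ' with hw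
    have hqs : Summable ((stepDist p)^[k + 1] (δ ξ)) := (hq (k + 1) ξ).2.summable
    have hws : Summable fun ξ' => |w ξ'| := by
      rw [summable_abs_iff]
      exact hqs.sub hπ1.summable
    have hval : ((P ^ (k + 1)) f - Pr f) ξ = ∑' ξ', w ξ' * f ξ' := by
      have h1 : ((P ^ (k + 1)) f - Pr f) ξ = (P ^ (k + 1)) f ξ - Pr f ξ := rfl
      rw [h1, hdual (k + 1) f ξ, hPr f ξ, hw]
      have hqabs : Summable fun i => |(stepDist p)^[k + 1] (δ ξ) i| :=
        hqs.congr fun i => (abs_of_nonneg ((hq (k + 1) ξ).1 i)).symm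
      have hπabs : Summable fun i => |π i| :=
        hπ1.summable.congr fun i => (abs_of_nonneg (hπ0 i)).symm
      rw [← Summable.tsum_sub (aux_summable_wf hqabs (hfb f)) (aux_summable_wf hπabs (hfb f))]
      exact tsum_congr fun ξ' => by ring
    rw [Real.norm_eq_abs, hval]
    calc |∑' ξ', w ξ' * f ξ'| ≤ (∑' ξ', |w ξ'|) * ‖f‖ := aux_abs_tsum_le hws (hfb f)
      _ ≤ (cρ * ρ ^ (k + 1)) * ‖f‖ := by
          refine mul_le_mul_of_nonneg_right ?_ (norm_nonneg f)
          exact hmix (δ ξ) (hδ0 ξ) (hδ1 ξ) (k + 1)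
  have hmain := aux_clm_main (P - Pr) cρ ρ hc.le hρ0 hρ1 hbound
  have hrw : (1 : (Ξ →ᵇ ℝ) →L[ℝ] (Ξ →ᵇ ℝ)) - P + Pr = 1 - (P - Pr) :=
    aux_clm_sub_add P Pr
  refine ⟨hmain.1, ?_, ?_, hmain.2.2.2⟩
  · rw [hrw]
    exact hmain.2.1
  · rw [hrw]
    exact hmain.2.2.1
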